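/- Let p be a prime, let a and h be positive integers, and let m be an integer not divisible by p. Let u : ℤ → ℤ be the (unique) sequence satisfying u_0 = u_1 = ⋯ = u_{h−1} = 0, u_h = 1, and ∑_{j=0}^{h+1} (binom(h+1, j) − m·[j = h]) · u_{n+j} = 0 for all n ∈ ℤ (such a sequence exists and takes integer values since the coefficients of u_n and u_{n+h+1} in the recurrence are both 1). Then for every integer d with −h+1 ≤ d ≤ h·p^a, in ℤ/pℤ one has ∑_{k=0}^{p^a−1} binom((h+1)k, k+d)·(m^k)⁻¹ = −∑_{r=1}^{h} binom(h+1, r+1) · u_{h−1+min(d−r·p^a, 0)}. -/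

import Mathlib

/-!
Both sides, as functions of `d`, satisfy for `d ≥ 1` the same inhomogeneous linear recurrence
`∑ⱼ C(h+1, j) X(d+1-j) - m X(d) = ∑ᵣ C(h+1, r+1) [d = r pᵃ]`, and both vanish for
`d > h pᵃ - h`. For the left side, Vandermonde's identity makes the recurrence telescope in `k`,
leaving the boundary term `C((h+1) pᵃ, pᵃ + d) m^{1 - pᵃ}`; Fermat gives `m^{pᵃ} = m`, and
`(1 + X)^{(h+1) pᵃ} = (1 + X^{pᵃ})^{h+1}` over `ZMod p` evaluates the binomial coefficient.
For the right side, `d ↦ u (h - 1 + min (d - c) 0)` follows the (reversed) recurrence of `u` up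
to `c` and then freezes at `u (h - 1) = 0`; the only defect is at `d = c`, coming from
`u (-1) = -1`. Since the recurrence determines `X (d - h)` from `X (d - h + 1), …, X (d + 1)`,
the two sides agree for all `d ≥ 1 - h`.
-/

/-- Binomial coefficient with an integer lower index: zero for negative lower index. -/
def ibinom (n : ℕ) (j : ℤ) : ℕ := if 0 ≤ j then n.choose j.toNat else 0

open Finset Polynomial

lemma ibinom_natCast (n k : ℕ) : ibinom n k = n.choose k := by
  simp [ibinom]

lemma ibinom_of_neg (n : ℕ) {j : ℤ} (hj : j < 0) : ibinom n j = 0 := by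
  simp [ibinom, hj]

lemma ibinom_of_lt {n : ℕ} {j : ℤ} (hj : n < j) : ibinom n j = 0 := by
  rw [ibinom, if_pos (by omega), Nat.choose_eq_zero_of_lt (by omega)]

lemma ibinom_zero_left (j : ℤ) : ibinom 0 j = if j = 0 then 1 else 0 := by
  rcases lt_trichotomy j 0 with hj | rfl | hj
  · rw [ibinom_of_neg _ hj, if_neg hj.ne]
  · simp [ibinom]
  · rw [ibinom_of_lt (by simpa using hj), if_neg hj.ne']

lemma ibinom_add_eq_sum (A B : ℕ) (n : ℤ) :
    ibinom (A + B) n = ∑ j ∈ range (B + 1), B.choose j * ibinom A (n - j) := by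
  rcases lt_or_ge n 0 with hn | hn
  · rw [ibinom_of_neg _ hn]
    exact (sum_eq_zero fun j _ => by rw [ibinom_of_neg _ (by omega), mul_zero]).symm
  obtain ⟨t, rfl⟩ := Int.eq_ofNat_of_zero_le hn
  calc ibinom (A + B) t = ∑ j ∈ range (t + 1), B.choose j * ibinom A (t - j) := by
        rw [ibinom_natCast, add_comm, Nat.add_choose_eq, Nat.sum_antidiagonal_eq_sum_range_succ_mk]
        refine sum_congr rfl fun j hj => ?_
        rw [← Nat.cast_sub (by simp at hj; omega), ibinom_natCast]
    _ = ∑ j ∈ range (B + t + 1), B.choose j * ibinom A (t - j) :=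
        sum_subset (range_subset_range.mpr (by omega)) fun j _ hj => by
          simp only [mem_range, not_lt] at hj
          rw [ibinom_of_neg _ (by omega), mul_zero]
    _ = ∑ j ∈ range (B + 1), B.choose j * ibinom A (t - j) :=
        (sum_subset (range_subset_range.mpr (by omega)) fun j _ hj => by
          simp only [mem_range, not_lt] at hj
          rw [Nat.choose_eq_zero_of_lt (by omega), zero_mul]).symm

lemma choose_mul_prime_pow {p : ℕ} [Fact p.Prime] (c a N : ℕ) :
    ((c * p ^ a).choose N : ZMod p) = if p ^ a ∣ N then (c.choose (N / p ^ a) : ZMod p) else 0 := by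
  have hexp : ((X + 1 : (ZMod p)[X]) ^ p ^ a) ^ c = expand (ZMod p) (p ^ a) ((X + 1) ^ c) := by
    rw [add_pow_char_pow, one_pow]; simp
  rw [← coeff_X_add_one_pow (ZMod p), mul_comm, pow_mul, hexp,
    coeff_expand (pow_pos (Fact.out : p.Prime).pos a), coeff_X_add_one_pow]

lemma choose_mul_prime_pow_add {p : ℕ} [Fact p.Prime] (h a e : ℕ) (he : 0 < e) :
    (((h + 1) * p ^ a).choose (p ^ a + e) : ZMod p) =
      ∑ r ∈ Icc 1 h, ((h + 1).choose (r + 1) : ZMod p) * if e = r * p ^ a then 1 else 0 := by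
  have hq : 0 < p ^ a := pow_pos (Fact.out : p.Prime).pos a
  rw [choose_mul_prime_pow]
  by_cases hdvd : p ^ a ∣ e
  · obtain ⟨s, rfl⟩ := hdvd
    have hs : 0 < s := Nat.pos_of_mul_pos_left he
    rw [if_pos ⟨s + 1, by ring⟩, show p ^ a + p ^ a * s = p ^ a * (s + 1) by ring,
      Nat.mul_div_cancel_left _ hq]
    rw [sum_eq_single s]
    · simp [mul_comm]
    · intro r _ hrs
      rw [if_neg fun hc => hrs (Nat.eq_of_mul_eq_mul_left hq (hc.trans (mul_comm _ _))).symm,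
        mul_zero]
    · intro hs'
      simp only [mem_Icc, not_and_or, not_le] at hs'
      rw [Nat.choose_eq_zero_of_lt (by omega), Nat.cast_zero, zero_mul]
  · rw [if_neg fun hc => hdvd ((Nat.dvd_add_right dvd_rfl).mp hc)]
    exact (sum_eq_zero fun r _ => by
      rw [if_neg fun hc => hdvd ⟨r, by rw [hc, mul_comm]⟩, mul_zero]).symm

section binomRec

variable {R : Type*} [CommRing R] (h : ℕ) (M : R)

def binomRec : (ℤ → R) →ₗ[R] ℤ → R where
  toFun X e := ∑ j ∈ range (h + 2), ((h + 1).choose j : R) * X (e + 1 - j) - M * X e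
  map_add' X Y := by
    ext e
    simp only [Pi.add_apply, mul_add, sum_add_distrib]
    ring
  map_smul' c X := by
    ext e
    simp only [Pi.smul_apply, smul_eq_mul, RingHom.id_apply, mul_sub, mul_sum]
    congr 1
    · exact sum_congr rfl fun _ _ => by ring
    · ring

variable {h M}

@[simp]
lemma binomRec_apply (X : ℤ → R) (e : ℤ) :
    binomRec h M X e = ∑ j ∈ range (h + 2), ((h + 1).choose j : R) * X (e + 1 - j) - M * X e :=
  rfl

lemma binomRec_congr {X Y : ℤ → R} {e : ℤ} (hXY : ∀ x, e - h ≤ x → x ≤ e + 1 → X x = Y x) :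
    binomRec h M X e = binomRec h M Y e := by
  rw [binomRec_apply, binomRec_apply, hXY e (by omega) (by omega)]
  congr 1
  refine sum_congr rfl fun j hj => ?_
  simp only [mem_range] at hj
  rw [hXY] <;> omega

lemma binomRec_comp_add (X : ℤ → R) (s e : ℤ) :
    binomRec h M (fun x => X (x + s)) e = binomRec h M X (e + s) := by
  simp only [binomRec_apply]
  congr 1
  exact sum_congr rfl fun j _ => by ring_nf

/-- For `h > 0` the coefficient of `X (e - h)` in `binomRec h M X (e + h)` is `1`, so `X` is
recovered downwards from its tail. -/
lemma eq_of_binomRec_eq (hh : 0 < h) {X Y : ℤ → R} {L N : ℤ}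
    (hrec : ∀ e, L + h ≤ e → binomRec h M X e = binomRec h M Y e)
    (htail : ∀ e, N ≤ e → X e = Y e) (e : ℤ) (he : L ≤ e) : X e = Y e := by
  suffices H : ∀ n : ℕ, ∀ e, L ≤ e → N ≤ e + n → X e = Y e from H (N - e).toNat e he (by omega)
  intro n
  induction n with
  | zero => exact fun e _ he => htail e (by simpa using he)
  | succ n ih =>
    intro e heL heN
    have hfar : ∀ j ∈ range (h + 1), ((h + 1).choose j : R) * X (e + h + 1 - j) =
        ((h + 1).choose j : R) * Y (e + h + 1 - j) := fun j hj => by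
      have := mem_range.mp hj
      rw [ih _ (by omega) (by omega)]
    have hrec' := hrec (e + h) (by omega)
    rw [binomRec_apply, binomRec_apply, sum_range_succ _ (h + 1), sum_range_succ _ (h + 1),
      sum_congr rfl hfar, ih (e + h) (by omega) (by omega), Nat.choose_self, Nat.cast_one,
      show e + h + 1 - ((h + 1 : ℕ) : ℤ) = e by push_cast; ring] at hrec'
    linear_combination hrec'

end binomRec

section binomSum

variable {K : Type*} [Field K]

def binomSum (h n : ℕ) (M : K) (e : ℤ) : K :=
  ∑ k ∈ range n, (ibinom ((h + 1) * k) (k + e) : K) * (M ^ k)⁻¹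

lemma binomRec_binomSum {M : K} (hM : M ≠ 0) (h n : ℕ) (e : ℤ) :
    binomRec h M (binomSum h n M) e =
      M * (M ^ n)⁻¹ * ibinom ((h + 1) * n) (n + e) - M * if e = 0 then 1 else 0 := by
  set A : ℕ → K := fun k => (ibinom ((h + 1) * k) (k + e) : K) * (M ^ k)⁻¹
  have hstep : ∀ k, ∑ j ∈ range (h + 2), ((h + 1).choose j : K) *
      ((ibinom ((h + 1) * k) (k + (e + 1 - j)) : K) * (M ^ k)⁻¹) = M * A (k + 1) := fun k => by
    have hvdm := ibinom_add_eq_sum ((h + 1) * k) (h + 1) ((k + 1 : ℕ) + e)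
    rw [show (h + 1) * k + (h + 1) = (h + 1) * (k + 1) by ring] at hvdm
    simp only [A, hvdm, Nat.cast_sum, Nat.cast_mul, mul_sum, sum_mul]
    refine sum_congr rfl fun j _ => ?_
    rw [pow_succ, mul_inv]
    field_simp
    push_cast
    ring_nf
  have hA0 : A 0 = if e = 0 then 1 else 0 := by
    simp [A, ibinom_zero_left, apply_ite]
  calc binomRec h M (binomSum h n M) e = ∑ k ∈ range n, (M * A (k + 1) - M * A k) := by
        simp only [binomRec_apply, binomSum, mul_sum, ← hstep, sum_sub_distrib]
        rw [sum_comm]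
    _ = M * (M ^ n)⁻¹ * ibinom ((h + 1) * n) (n + e) - M * if e = 0 then 1 else 0 := by
        rw [sum_range_sub (fun k => M * A k), hA0]
        simp only [A]
        ring

lemma binomSum_eq_zero (h n : ℕ) (M : K) {e : ℤ} (he : h * n - h < e) : binomSum h n M e = 0 :=
  sum_eq_zero fun k hk => by
    have : (h : ℤ) * k ≤ h * n - h := by
      have := mem_range.mp hk
      nlinarith
    rw [ibinom_of_lt (by push_cast; nlinarith), Nat.cast_zero, zero_mul]

end binomSum

lemma binomRec_intCast_eq_zero {R : Type*} [CommRing R] {h : ℕ} {m : ℤ} {u : ℤ → ℤ}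
    (hrec : ∀ n : ℤ, ∑ j ∈ range (h + 2),
      (((h + 1).choose j : ℤ) - m * if j = h then 1 else 0) * u (n + j) = 0) :
    binomRec h (m : R) (fun n => (u n : R)) = 0 := by
  ext e
  have hfwd : ∑ j ∈ range (h + 2), ((h + 1).choose j : ℤ) * u (e - h + j) = m * u e := by
    have := hrec (e - h)
    simp only [sub_mul, sum_sub_distrib, mul_ite, mul_one, mul_zero, ite_mul, zero_mul,
      sum_ite_eq', mem_range, sub_add_cancel] at this
    simpa [sub_eq_zero] using this
  have hbwd : ∑ j ∈ range (h + 2), ((h + 1).choose j : ℤ) * u (e + 1 - j) = m * u e := by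
    rw [← hfwd, ← sum_range_reflect]
    refine sum_congr rfl fun j hj => ?_
    simp only [mem_range] at hj
    rw [show h + 2 - 1 - j = h + 1 - j by omega, Nat.choose_symm (by omega)]
    push_cast [Nat.cast_sub (by omega : j ≤ h + 1)]
    ring_nf
  rw [binomRec_apply, Pi.zero_apply, sub_eq_zero]
  exact_mod_cast congrArg (Int.cast : ℤ → R) hbwd

section stopAt

variable {R : Type*} {h : ℕ} {U : ℤ → R}

def stopAt (U : ℤ → R) (h : ℕ) (c e : ℤ) : R := U (h - 1 + min (e - c) 0)

lemma stopAt_of_le {c e : ℤ} (he : e ≤ c) : stopAt U h c e = U (e + (h - 1 - c)) := by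
  rw [stopAt, min_eq_left (by omega)]
  ring_nf

variable [CommRing R] {M : R} (hh : 0 < h) (hU0 : ∀ n : ℤ, 0 ≤ n → n < h → U n = 0)
  (hUh : U h = 1) (hrec : binomRec h M U = 0)
include hh hU0 hUh hrec

lemma apply_neg_one_eq_neg_one : U (-1) = -1 := by
  have H := congrFun hrec (h - 1)
  simp only [binomRec_apply, Pi.zero_apply, sum_range_succ _ (h + 1), sum_range_succ',
    Nat.choose_self, Nat.choose_zero_right, Nat.cast_one, one_mul, Nat.cast_zero, sub_zero,
    hU0 (h - 1) (by omega) (by omega), mul_zero, sub_zero] at H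
  have hmid : ∀ j ∈ range h, ((h + 1).choose (j + 1) : R) * U (h - 1 + 1 - (j + 1 : ℕ)) = 0 :=
    fun j hj => by
      have := mem_range.mp hj
      rw [hU0 _ (by omega) (by omega), mul_zero]
  rw [sum_eq_zero hmid, show (h : ℤ) - 1 + 1 = h by ring, hUh,
    show (h : ℤ) - ((h + 1 : ℕ) : ℤ) = -1 by push_cast; ring] at H
  linear_combination H

lemma stopAt_of_ge {c e : ℤ} (he : c - h ≤ e) :
    stopAt U h c e = -if e = c - h then 1 else 0 := by
  rcases eq_or_ne e (c - h) with rfl | hne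
  · rw [stopAt, min_eq_left (by omega), if_pos rfl, ← apply_neg_one_eq_neg_one hh hU0 hUh hrec]
    ring_nf
  · rw [stopAt, if_neg hne, neg_zero]
    exact hU0 _ (by omega) (by omega)

lemma stopAt_eq_zero {c e : ℤ} (he : c - h < e) : stopAt U h c e = 0 := by
  rw [stopAt_of_ge hh hU0 hUh hrec he.le, if_neg he.ne', neg_zero]

lemma binomRec_stopAt (c e : ℤ) : binomRec h M (stopAt U h c) e = -if e = c then 1 else 0 := by
  rcases lt_or_ge e c with hec | hce
  · have hshift : binomRec h M (fun x => U (x + (h - 1 - c))) e = 0 := by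
      rw [binomRec_comp_add, hrec, Pi.zero_apply]
    rw [if_neg hec.ne, neg_zero, ← hshift]
    exact binomRec_congr fun x _ hx => stopAt_of_le (by omega)
  · rw [binomRec_congr (Y := fun x => -if x = c - h then 1 else 0)
      fun x hx _ => stopAt_of_ge hh hU0 hUh hrec (by omega)]
    rw [binomRec_apply, if_neg (by omega : e ≠ c - h), sum_eq_single_of_mem (h + 1) (by simp)]
    · simp only [Nat.choose_self, Nat.cast_one, one_mul, neg_zero, mul_zero, sub_zero,
        show e + 1 - ((h + 1 : ℕ) : ℤ) = c - h ↔ e = c by omega]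
    · intro j hj hjh
      simp only [mem_range] at hj
      rw [if_neg (by omega), neg_zero, mul_zero]

end stopAt

section stopSum

variable {R : Type*} [CommRing R] {h : ℕ} {M : R} {U : ℤ → R}

def stopSum (U : ℤ → R) (h : ℕ) (Q : ℤ) : ℤ → R :=
  -∑ r ∈ Icc 1 h, ((h + 1).choose (r + 1) : R) • stopAt U h (r * Q)

variable (hh : 0 < h) (hU0 : ∀ n : ℤ, 0 ≤ n → n < h → U n = 0) (hUh : U h = 1)
  (hrec : binomRec h M U = 0)
include hh hU0 hUh hrec

lemma binomRec_stopSum (Q e : ℤ) : binomRec h M (stopSum U h Q) e =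
    ∑ r ∈ Icc 1 h, ((h + 1).choose (r + 1) : R) * if e = r * Q then 1 else 0 := by
  rw [stopSum, map_neg, map_sum, Pi.neg_apply, Finset.sum_apply, ← sum_neg_distrib]
  refine sum_congr rfl fun r _ => ?_
  rw [map_smul, Pi.smul_apply, binomRec_stopAt hh hU0 hUh hrec, smul_eq_mul, mul_neg, neg_neg]

lemma stopSum_eq_zero {Q e : ℤ} (hQ : 0 ≤ Q) (he : h * Q - h < e) : stopSum U h Q e = 0 := by
  rw [stopSum, Pi.neg_apply, Finset.sum_apply, neg_eq_zero]
  refine sum_eq_zero fun r hr => ?_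
  have hr : (r : ℤ) * Q ≤ h * Q := by
    gcongr
    exact_mod_cast (mem_Icc.mp hr).2
  rw [Pi.smul_apply, stopAt_eq_zero hh hU0 hUh hrec (by omega), smul_zero]

end stopSum

lemma binomRec_binomSum_prime_pow {p : ℕ} [Fact p.Prime] {M : ZMod p} (hM : M ≠ 0) (h a : ℕ)
    {e : ℤ} (he : 0 < e) : binomRec h M (binomSum h (p ^ a) M) e =
      ∑ r ∈ Icc 1 h, ((h + 1).choose (r + 1) : ZMod p) * if e = r * (p : ℤ) ^ a then 1 else 0 := by
  lift e to ℕ using he.le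
  rw [binomRec_binomSum hM, ZMod.pow_card_pow, mul_inv_cancel₀ hM, one_mul, if_neg he.ne',
    mul_zero, sub_zero, ← Nat.cast_add, ibinom_natCast, choose_mul_prime_pow_add h a e (by omega)]
  norm_cast

theorem stmt_15_general (p : ℕ) (hp : p.Prime) (a h : ℕ) (hh : 0 < h)
    (m : ℤ) (hm : ¬ ((p : ℤ) ∣ m))
    (u : ℤ → ℤ)
    (hu0 : ∀ n : ℤ, 0 ≤ n → n < (h : ℤ) → u n = 0)
    (huh : u (h : ℤ) = 1)
    (hurec : ∀ n : ℤ,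
      (∑ j ∈ Finset.range (h + 2),
        (((h + 1).choose j : ℤ) - m * (if j = h then 1 else 0)) * u (n + (j : ℤ))) = 0)
    (d : ℤ) (hd1 : -(h : ℤ) + 1 ≤ d) :
    (∑ k ∈ Finset.range (p ^ a),
        (ibinom ((h + 1) * k) ((k : ℤ) + d) : ZMod p) * ((m : ZMod p) ^ k)⁻¹) =
      -∑ r ∈ Finset.Icc 1 h,
        (((h + 1).choose (r + 1)) : ZMod p) *
          ((u ((h : ℤ) - 1 + min (d - (r : ℤ) * (p : ℤ) ^ a) 0) : ℤ) : ZMod p) := by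
  have := Fact.mk hp
  have hM : (m : ZMod p) ≠ 0 := by rwa [Ne, ZMod.intCast_zmod_eq_zero_iff_dvd]
  set U : ℤ → ZMod p := fun n => (u n : ZMod p)
  have hU0 : ∀ n : ℤ, 0 ≤ n → n < h → U n = 0 := fun n h0 h1 => by simp [U, hu0 n h0 h1]
  have hUh : U h = 1 := by simp [U, huh]
  have hUrec : binomRec h (m : ZMod p) U = 0 := binomRec_intCast_eq_zero hurec
  have hQ : (0 : ℤ) ≤ (p : ℤ) ^ a := by positivity
  have key := eq_of_binomRec_eq hh (L := 1 - h) (N := h * (p : ℤ) ^ a - h + 1)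
    (X := binomSum h (p ^ a) (m : ZMod p)) (Y := stopSum U h ((p : ℤ) ^ a))
    (fun e he => by
      rw [binomRec_binomSum_prime_pow hM h a (by omega), binomRec_stopSum hh hU0 hUh hUrec])
    (fun e he => by
      rw [binomSum_eq_zero, stopSum_eq_zero hh hU0 hUh hUrec hQ] <;> push_cast <;> omega)
    d (by omega)
  simpa [binomSum, stopSum, stopAt, U] using key

theorem stmt_15 (p : ℕ) (hp : p.Prime) (a h : ℕ) (ha : 0 < a) (hh : 0 < h)
    (m : ℤ) (hm : ¬ ((p : ℤ) ∣ m))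
    (u : ℤ → ℤ)
    (hu0 : ∀ n : ℤ, 0 ≤ n → n < (h : ℤ) → u n = 0)
    (huh : u (h : ℤ) = 1)
    (hurec : ∀ n : ℤ,
      (∑ j ∈ Finset.range (h + 2),
        (((h + 1).choose j : ℤ) - m * (if j = h then 1 else 0)) * u (n + (j : ℤ))) = 0)
    (d : ℤ) (hd1 : -(h : ℤ) + 1 ≤ d) (hd2 : d ≤ (h : ℤ) * (p : ℤ) ^ a) :
    (∑ k ∈ Finset.range (p ^ a),
        (ibinom ((h + 1) * k) ((k : ℤ) + d) : ZMod p) * ((m : ZMod p) ^ k)⁻¹) =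
      -∑ r ∈ Finset.Icc 1 h,
        (((h + 1).choose (r + 1)) : ZMod p) *
          ((u ((h : ℤ) - 1 + min (d - (r : ℤ) * (p : ℤ) ^ a) 0) : ℤ) : ZMod p) :=
  stmt_15_general p hp a h hh m hm u hu0 huh hurec d hd1
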